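/- Let (Π, g) be a Boolean system and suppose the multiset S of states in a periodic orbit satisfies ζ*_I(S) < τ/2^{|I|} for the input set I of regulatory function g_k, where g_k has bias Λ ≥ 1/2 + ε and 0 < τ < 1/2. Then the fraction ζ_k(S) of states in the orbit with k-th coordinate equal to 1 satisfies ζ_k(S) > 1/2 + (1−τ)ε − τ/2. -/

import Mathlib

open Finset

/-- `φ` depends on input variable `i`. -/
def BoolFunDependsOn {n : ℕ} (φ : (Fin n → Bool) → Bool) (i : Fin n) : Prop :=
  ∃ s r : Fin n → Bool, (∀ j, j ≠ i → s j = r j) ∧ φ s ≠ φ r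

/-!
Along the orbit `s (t + 1) = g (s t)`, so by periodicity the number of times with `s t k = true`
equals the number of times with `g (s t) k = true`. Since `g_k` only reads the coordinates in
`I`, it factors as `ψ ∘ I.restrict`, and restriction to `I` maps the uniform distribution on the
cube to the uniform one on `{0,1}^I`, so the patterns `a` with `ψ a = true` form a fraction
`Λ ≥ 1/2 + ε` of all patterns. Every pattern occurs along the orbit with frequency greater than
`(1 - τ)/2^|I|`, hence `ζ_k(S) > (1 - τ) Λ ≥ (1 - τ)(1/2 + ε)`.
-/

theorem Function.Periodic.card_filter_range_succ {α : Type*} {s : ℕ → α} {L : ℕ}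
    (hs : Function.Periodic s L) (p : α → Prop) [DecidablePred p] :
    #{t ∈ range L | p (s (t + 1))} = #{t ∈ range L | p (s t)} := by
  have hL : s L = s 0 := by simpa using hs 0
  have h := (sum_range_succ (fun t => if p (s t) then 1 else 0) L).symm.trans
    (sum_range_succ' (fun t => if p (s t) then 1 else 0) L)
  rw [hL] at h
  simp only [card_filter]
  exact (add_right_cancel h).symm

namespace Finset

variable {ι : Type*} {π : ι → Type*}

theorem restrict_eq_restrict_iff (I : Finset ι) {x y : ∀ i, π i} :
    I.restrict x = I.restrict y ↔ ∀ i ∈ I, x i = y i := by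
  simp [funext_iff]

theorem restrict_surjective [∀ i, Nonempty (π i)] (I : Finset ι) :
    Function.Surjective (I.restrict (π := π)) := by
  classical
  intro a
  exact ⟨fun i => if h : i ∈ I then a ⟨i, h⟩ else Classical.arbitrary _, by ext; simp⟩

end Finset

theorem card_filter_restrict_mul_card {ι β : Type*} [Fintype ι] [DecidableEq ι] [Fintype β]
    (I : Finset ι) (p : (I → β) → Prop) [DecidablePred p] :
    #{x : ι → β | p (I.restrict x)} * Fintype.card β ^ #I =
      #{a : I → β | p a} * Fintype.card β ^ Fintype.card ι := by
  set e := Equiv.piEquivPiSubtypeProd (· ∈ I) (fun _ => β)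
  have hcount : #{x : ι → β | p (I.restrict x)} =
      #(univ.filter p ×ˢ (univ : Finset ({i // i ∉ I} → β))) :=
    card_equiv e fun x => by simp only [mem_filter, mem_product, mem_univ, true_and, and_true]; rfl
  have hcard := Fintype.card_congr e
  simp only [Fintype.card_prod, Fintype.card_fun, Fintype.card_coe] at hcard
  rw [hcount, card_product, card_univ, Fintype.card_fun, hcard]
  ring

theorem apply_update_of_not_boolFunDependsOn {n : ℕ} {φ : (Fin n → Bool) → Bool} {i : Fin n}
    (h : ¬ BoolFunDependsOn φ i) (x : Fin n → Bool) (b : Bool) :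
    φ (Function.update x i b) = φ x :=
  by_contra fun hne => h ⟨_, _, fun _ hj => Function.update_of_ne hj b x, hne⟩

theorem apply_eq_of_forall_boolFunDependsOn_mem {n : ℕ} {φ : (Fin n → Bool) → Bool}
    {I : Finset (Fin n)} (hI : ∀ i, BoolFunDependsOn φ i → i ∈ I) {x y : Fin n → Bool}
    (hxy : ∀ i ∈ I, x i = y i) : φ x = φ y := by
  suffices h : ∀ J : Finset (Fin n), φ (J.piecewise x y) = φ y by simpa using h univ
  intro J
  induction J using Finset.induction_on with
  | empty => simp
  | insert a J ha ih =>
    rw [piecewise_insert, ← ih]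
    by_cases haI : a ∈ I
    · rw [hxy a haI, ← piecewise_eq_of_notMem J x y ha, Function.update_eq_self]
    · exact apply_update_of_not_boolFunDependsOn (mt (hI a) haI) _ _

theorem exists_comp_restrict_of_forall_boolFunDependsOn_mem {n : ℕ}
    (φ : (Fin n → Bool) → Bool) (I : Finset (Fin n)) (hI : ∀ i, BoolFunDependsOn φ i → i ∈ I) :
    ∃ ψ : (I → Bool) → Bool, ∀ x, φ x = ψ (I.restrict x) := by
  have hsurj := I.restrict_surjective (π := fun _ => Bool)
  refine ⟨fun a => φ (Function.surjInv hsurj a), fun x => ?_⟩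
  refine apply_eq_of_forall_boolFunDependsOn_mem hI ((I.restrict_eq_restrict_iff).1 ?_)
  exact (Function.surjInv_eq hsurj _).symm

theorem mul_lt_card_filter_mem_div {α β : Type*} [DecidableEq β] (T : Finset α) (u : α → β)
    {P : Finset β} (hP : P.Nonempty) {δ c : ℝ} (h : ∀ b ∈ P, δ < #{t ∈ T | u t = b} / c) :
    #P * δ < #{t ∈ T | u t ∈ P} / c := by
  rw [← sum_card_fiberwise_eq_card_filter, Nat.cast_sum, sum_div]
  calc (#P : ℝ) * δ = ∑ _b ∈ P, δ := by rw [sum_const, nsmul_eq_mul]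
    _ < _ := sum_lt_sum_of_nonempty hP h

theorem stmt8_general {n : ℕ} (g : (Fin n → Bool) → (Fin n → Bool))
    (L : ℕ) (s : ℕ → Fin n → Bool)
    (hstep : ∀ t, g (s t) = s (t + 1))
    (hper : ∀ t, s (t + L) = s t)
    (k : Fin n) (I : Finset (Fin n))
    (hI : ∀ i, BoolFunDependsOn (fun x => g x k) i ↔ i ∈ I)
    (ε : ℝ) (hε0 : 0 < ε)
    (hbias : ((univ.filter fun x : Fin n → Bool => g x k = true).card : ℝ) / 2 ^ n ≥ 1 / 2 + ε)
    (τ : ℝ) (hτ1 : τ < 1 / 2)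
    (hζ : ∀ σ : Fin n → Bool,
        1 / 2 ^ I.card - (((range L).filter fun t => ∀ i ∈ I, s t i = σ i).card : ℝ) / L
          < τ / 2 ^ I.card) :
    (((range L).filter fun t => s t k = true).card : ℝ) / L >
      1 / 2 + (1 - τ) * ε - τ / 2 := by
  obtain ⟨ψ, hψ⟩ :=
    exists_comp_restrict_of_forall_boolFunDependsOn_mem (fun x => g x k) I fun i => (hI i).1
  set P := univ.filter fun a : I → Bool => ψ a = true
  have hbiasP : 1 / 2 + ε ≤ (#P : ℝ) / 2 ^ #I := by
    have h := card_filter_restrict_mul_card I fun a : I → Bool => ψ a = true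
    simp only [Fintype.card_bool, Fintype.card_fin] at h
    simp only [hψ] at hbias
    calc 1 / 2 + ε ≤ _ := hbias
      _ = _ := by rw [div_eq_div_iff (by positivity) (by positivity)]; exact_mod_cast h
  have hP : P.Nonempty := by
    rcases P.eq_empty_or_nonempty with h | h
    · rw [h, card_empty, Nat.cast_zero, zero_div] at hbiasP
      linarith
    · exact h
  have hfreq : ∀ a ∈ P, (1 - τ) / 2 ^ #I < #{t ∈ range L | I.restrict (s t) = a} / L := by
    intro a _
    obtain ⟨σ, rfl⟩ := I.restrict_surjective (π := fun _ => Bool) a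
    have h := hζ σ
    simp only [← I.restrict_eq_restrict_iff] at h
    linarith [sub_div (1 : ℝ) τ (2 ^ #I)]
  have hshift : #{t ∈ range L | s t k = true} = #{t ∈ range L | I.restrict (s t) ∈ P} := by
    rw [← Function.Periodic.card_filter_range_succ hper fun x => x k = true]
    simp [P, ← hstep, hψ]
  rw [gt_iff_lt, hshift]
  calc 1 / 2 + (1 - τ) * ε - τ / 2 = (1 / 2 + ε) * (1 - τ) := by ring
    _ ≤ #P / 2 ^ #I * (1 - τ) := by gcongr; linarith
    _ = #P * ((1 - τ) / 2 ^ #I) := by ring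
    _ < _ := mul_lt_card_filter_mem_div _ _ hP hfreq

/-- If along a periodic orbit `ζ*_I < τ/2^|I|` for the input set `I` of `g_k`, and `g_k` has
bias `Λ ≥ 1/2 + ε`, then the fraction of orbit states with `k`-th coordinate `1` exceeds
`1/2 + (1-τ)ε - τ/2`. -/
theorem stmt8 {n : ℕ} (g : (Fin n → Bool) → (Fin n → Bool))
    (L : ℕ) (hL : 0 < L) (s : ℕ → Fin n → Bool)
    (hstep : ∀ t, g (s t) = s (t + 1))
    (hper : ∀ t, s (t + L) = s t)
    (hdistinct : Set.InjOn s (Finset.range L))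
    (k : Fin n) (I : Finset (Fin n))
    (hI : ∀ i, BoolFunDependsOn (fun x => g x k) i ↔ i ∈ I)
    (ε : ℝ) (hε0 : 0 < ε)
    (hbias : ((univ.filter fun x : Fin n → Bool => g x k = true).card : ℝ) / 2 ^ n ≥ 1 / 2 + ε)
    (τ : ℝ) (hτ0 : 0 < τ) (hτ1 : τ < 1 / 2)
    (hζ : ∀ σ : Fin n → Bool,
        1 / 2 ^ I.card - (((range L).filter fun t => ∀ i ∈ I, s t i = σ i).card : ℝ) / L
          < τ / 2 ^ I.card) :
    (((range L).filter fun t => s t k = true).card : ℝ) / L >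
      1 / 2 + (1 - τ) * ε - τ / 2 :=
  stmt8_general g L s hstep hper k I hI ε hε0 hbias τ hτ1 hζ
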